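/- Let A, B be n×n real symmetric matrices with eigenvalues λ₁(A) ≤ ... ≤ λₙ(A) and λ₁(B) ≤ ... ≤ λₙ(B). Then (∑_{i=1}^n (λᵢ(B) - λᵢ(A))²)^{1/2} ≤ ‖B - A‖_F. -/
import Mathlib


noncomputable def frobNorm {n : ℕ} (E : Matrix (Fin n) (Fin n) ℝ) : ℝ :=
  Real.sqrt (∑ u, ∑ v, (E u v) ^ 2)

noncomputable def sortedEig {n : ℕ} {A : Matrix (Fin n) (Fin n) ℝ}
    (hA : A.IsHermitian) : Fin n → ℝ :=
  hA.eigenvalues ∘ Tuple.sort hA.eigenvalues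

open Matrix Finset

lemma traceAB (n : ℕ) (A B : Matrix (Fin n) (Fin n) ℝ)
    (hA : A.IsHermitian) (hB : B.IsHermitian) :
    (A * B).trace = ∑ i, ∑ j, hA.eigenvalues i * hB.eigenvalues j *
      ((star (hA.eigenvectorUnitary : Matrix (Fin n) (Fin n) ℝ) *
        (hB.eigenvectorUnitary : Matrix (Fin n) (Fin n) ℝ)) i j) ^ 2 := by
  set U := (hA.eigenvectorUnitary : Matrix (Fin n) (Fin n) ℝ) with hU
  set V := (hB.eigenvectorUnitary : Matrix (Fin n) (Fin n) ℝ) with hV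
  set W := star U * V with hW
  set a := hA.eigenvalues
  set b := hB.eigenvalues
  have hAs : A = U * Matrix.diagonal a * star U := by
    have := hA.spectral_theorem; rwa [RCLike.ofReal_real_eq_id, Function.id_comp] at this
  have hBs : B = V * Matrix.diagonal b * star V := by
    have := hB.spectral_theorem; rwa [RCLike.ofReal_real_eq_id, Function.id_comp] at this
  have key : A * B = U * (Matrix.diagonal a * W * Matrix.diagonal b * star W) * star U := by
    have h1 : U * star U = 1 := Matrix.mem_unitaryGroup_iff.mp hA.eigenvectorUnitary.2
    rw [hAs, hBs, hW, Matrix.star_mul, star_star]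
    simp only [Matrix.mul_assoc, h1, Matrix.mul_one]
  rw [key, trace_mul_cycle, ← Matrix.mul_assoc, (Matrix.mem_unitaryGroup_iff').mp
    hA.eigenvectorUnitary.2, Matrix.one_mul]
  rw [Matrix.trace]
  congr 1; ext i
  rw [Matrix.diag_apply, Matrix.mul_assoc, Matrix.mul_assoc, Matrix.diagonal_mul,
    Matrix.mul_apply, Finset.mul_sum]
  congr 1; ext j
  rw [Matrix.diagonal_mul, Matrix.star_apply, star_trivial]
  ring

lemma ds_bound {n : ℕ} (a b : Fin n → ℝ) {S : Matrix (Fin n) (Fin n) ℝ}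
    (hS : S ∈ doublyStochastic ℝ (Fin n)) :
    ∑ i, ∑ j, a i * b j * S i j ≤
      ∑ i, (a ∘ Tuple.sort a) i * (b ∘ Tuple.sort b) i := by
  set c := ∑ i, (a ∘ Tuple.sort a) i * (b ∘ Tuple.sort b) i with hc
  have hperm : ∀ σ : Equiv.Perm (Fin n),
      ∑ i, ∑ j, a i * b j * (σ.permMatrix ℝ) i j ≤ c := by
    intro σ
    have h1 : ∑ i, ∑ j, a i * b j * (σ.permMatrix ℝ) i j = ∑ i, a i * b (σ i) := by
      refine Finset.sum_congr rfl fun i _ => ?_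
      simp [Equiv.Perm.permMatrix, PEquiv.toMatrix_apply, Equiv.toPEquiv_apply,
        mul_ite, Finset.sum_ite_eq, eq_comm]
    rw [h1]
    set p := Tuple.sort a
    set q := Tuple.sort b
    have h2 : ∑ i, a i * b (σ i) = ∑ k, (a ∘ p) k * ((b ∘ q) ∘ ((p.trans σ).trans q.symm)) k := by
      rw [← Equiv.sum_comp p (fun i => a i * b (σ i))]
      simp [Function.comp]
    rw [h2, hc]
    exact ((Tuple.monotone_sort a).monovary (Tuple.monotone_sort b)).sum_mul_comp_perm_le_sum_mul
  have hlin : IsLinearMap ℝ (fun M : Matrix (Fin n) (Fin n) ℝ => ∑ i, ∑ j, a i * b j * M i j) := by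
    constructor
    · intro M N
      simp [Matrix.add_apply, mul_add, Finset.sum_add_distrib]
    · intro r M
      simp [Matrix.smul_apply, Finset.mul_sum, smul_eq_mul]
      congr 1; ext i; congr 1; ext j; ring
  have hSmem : S ∈ convexHull ℝ {M | ∃ σ : Equiv.Perm (Fin n), σ.permMatrix ℝ = M} := by
    rw [← doublyStochastic_eq_convexHull_permMatrix]; exact hS
  have hsub : convexHull ℝ {M | ∃ σ : Equiv.Perm (Fin n), σ.permMatrix ℝ = M} ⊆
      {M : Matrix (Fin n) (Fin n) ℝ | ∑ i, ∑ j, a i * b j * M i j ≤ c} := by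
    refine convexHull_min ?_ (convex_halfSpace_le hlin c)
    rintro _ ⟨σ, rfl⟩
    exact hperm σ
  exact hsub hSmem

lemma unitary_sq_ds {n : ℕ} (W : Matrix (Fin n) (Fin n) ℝ)
    (hW : W ∈ Matrix.unitaryGroup (Fin n) ℝ) :
    (Matrix.of fun i j => W i j ^ 2) ∈ doublyStochastic ℝ (Fin n) := by
  rw [mem_doublyStochastic_iff_sum]
  refine ⟨fun i j => sq_nonneg _, fun i => ?_, fun j => ?_⟩
  · have h := congrFun (congrFun (Matrix.mem_unitaryGroup_iff.mp hW) i) i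
    simp only [Matrix.mul_apply, Matrix.star_apply, star_trivial, Matrix.one_apply_eq] at h
    simpa [pow_two] using h
  · have h := congrFun (congrFun (Matrix.mem_unitaryGroup_iff'.mp hW) j) j
    simp only [Matrix.mul_apply, Matrix.star_apply, star_trivial, Matrix.one_apply_eq] at h
    simpa [pow_two] using h

lemma traceA2 {n : ℕ} (A : Matrix (Fin n) (Fin n) ℝ) (hA : A.IsHermitian) :
    (A * A).trace = ∑ i, hA.eigenvalues i ^ 2 := by
  rw [traceAB n A A hA hA, Matrix.mem_unitaryGroup_iff'.mp hA.eigenvectorUnitary.2]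
  refine Finset.sum_congr rfl fun i _ => ?_
  rw [Finset.sum_eq_single i]
  · simp [Matrix.one_apply_eq]; ring
  · intro j _ hj; simp [Matrix.one_apply, Ne.symm hj]
  · simp

lemma frob_sq_eq_trace {n : ℕ} (E : Matrix (Fin n) (Fin n) ℝ) (hE : E.IsHermitian) :
    ∑ u, ∑ v, (E u v) ^ 2 = (E * E).trace := by
  rw [Matrix.trace]
  refine Finset.sum_congr rfl fun u _ => ?_
  rw [Matrix.diag_apply, Matrix.mul_apply]
  refine Finset.sum_congr rfl fun v _ => ?_
  have : E v u = E u v := by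
    have := hE.apply u v
    simpa using this
  rw [this, pow_two]

theorem hoffman_wielandt
    (n : ℕ) (A B : Matrix (Fin n) (Fin n) ℝ)
    (hA : A.IsHermitian) (hB : B.IsHermitian) :
    Real.sqrt (∑ i, (sortedEig hB i - sortedEig hA i) ^ 2) ≤ frobNorm (B - A) := by
  unfold frobNorm sortedEig
  set a := hA.eigenvalues with ha
  set b := hB.eigenvalues with hb
  set sa := a ∘ Tuple.sort a with hsa
  set sb := b ∘ Tuple.sort b with hsb
  apply Real.sqrt_le_sqrt
  have h1 : ∑ i, sa i ^ 2 = (A * A).trace := by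
    rw [traceA2 A hA]
    exact Equiv.sum_comp (Tuple.sort a) (fun i => a i ^ 2)
  have h2 : ∑ i, sb i ^ 2 = (B * B).trace := by
    rw [traceA2 B hB]
    exact Equiv.sum_comp (Tuple.sort b) (fun i => b i ^ 2)
  have hWmem : (star (hA.eigenvectorUnitary : Matrix (Fin n) (Fin n) ℝ) *
      (hB.eigenvectorUnitary : Matrix (Fin n) (Fin n) ℝ)) ∈ Matrix.unitaryGroup (Fin n) ℝ :=
    mul_mem (Unitary.star_mem hA.eigenvectorUnitary.2) hB.eigenvectorUnitary.2
  have h3 : (A * B).trace ≤ ∑ i, sa i * sb i := by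
    rw [traceAB n A B hA hB]
    exact ds_bound a b (unitary_sq_ds _ hWmem)
  have h4 : ∑ u, ∑ v, ((B - A) u v) ^ 2 = ((B - A) * (B - A)).trace :=
    frob_sq_eq_trace _ (hB.sub hA)
  have h5 : ((B - A) * (B - A)).trace = (B * B).trace - 2 * (A * B).trace + (A * A).trace := by
    rw [Matrix.sub_mul, Matrix.mul_sub, Matrix.mul_sub, Matrix.trace_sub, Matrix.trace_sub,
      Matrix.trace_sub, Matrix.trace_mul_comm B A]
    ring
  have hX : ∑ i, (sb i - sa i) ^ 2 =
      ∑ i, sb i ^ 2 - 2 * ∑ i, sa i * sb i + ∑ i, sa i ^ 2 := by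
    rw [Finset.sum_congr rfl (fun i _ => show (sb i - sa i) ^ 2
        = sb i ^ 2 - 2 * (sa i * sb i) + sa i ^ 2 by ring),
      Finset.sum_add_distrib, Finset.sum_sub_distrib, ← Finset.mul_sum]
  rw [hX, h4, h5, ← h1, ← h2]
  linarith
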